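/- arXiv:2603.10316 — 9 statements merged into one kernel-verified Lean document; each statement's English description precedes it below -/
import Mathlib

section
/- For every finite simple graph G, |corona(G)| + |core(G)| ≤ 2·α(G) + k, where k is the maximum cardinality of a set of pairwise vertex-distinct odd cycles of G. -/
variable {V : Type*} [Fintype V] [DecidableEq V]

/-- `S` is an independent set of `G`. -/
def IsIndep (G : SimpleGraph V) (S : Set V) : Prop :=
  ∀ ⦃u⦄, u ∈ S → ∀ ⦃v⦄, v ∈ S → ¬ G.Adj u v

/-- The independence number `α(G)`: the maximum cardinality of an independent set. -/
noncomputable def indepNum (G : SimpleGraph V) : ℕ :=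
  sSup {n : ℕ | ∃ S : Set V, IsIndep G S ∧ S.ncard = n}

/-- `S` is a maximum independent set of `G`. -/
def IsMaxIndep (G : SimpleGraph V) (S : Set V) : Prop :=
  IsIndep G S ∧ ∀ T : Set V, IsIndep G T → T.ncard ≤ S.ncard

/-- The neighborhood `N(X)` of a set of vertices `X`. -/
def nbhdSet (G : SimpleGraph V) (X : Set V) : Set V :=
  {v | ∃ u ∈ X, G.Adj u v}

/-- The difference `d_G(X) = |X| - |N(X)|` of a vertex set `X`. -/
noncomputable def diffSet (G : SimpleGraph V) (X : Set V) : ℤ :=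
  (X.ncard : ℤ) - ((nbhdSet G X).ncard : ℤ)

/-- `I` is a critical independent set of `G`. -/
def IsCriticalIndep (G : SimpleGraph V) (I : Set V) : Prop :=
  IsIndep G I ∧ ∀ J : Set V, IsIndep G J → diffSet G J ≤ diffSet G I

/-- `I` is a maximum-cardinality critical independent set of `G`. -/
def IsMaxCriticalIndep (G : SimpleGraph V) (I : Set V) : Prop :=
  IsCriticalIndep G I ∧ ∀ J : Set V, IsCriticalIndep G J → J.ncard ≤ I.ncard

/-- `core(G)`: the intersection of all maximum independent sets of `G`. -/
def coreSet (G : SimpleGraph V) : Set V := ⋂₀ {S : Set V | IsMaxIndep G S}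

/-- `corona(G)`: the union of all maximum independent sets of `G`. -/
def coronaSet (G : SimpleGraph V) : Set V := ⋃₀ {S : Set V | IsMaxIndep G S}

/-- `ker(G)`: the intersection of all critical independent sets of `G`. -/
def kerSet (G : SimpleGraph V) : Set V := ⋂₀ {S : Set V | IsCriticalIndep G S}

/-- `diadem(G)`: the union of all critical independent sets of `G`. -/
def diademSet (G : SimpleGraph V) : Set V := ⋃₀ {S : Set V | IsCriticalIndep G S}

/-- `nucleus(G)`: the intersection of all maximum-cardinality critical independent
sets of `G`. -/
def nucleusSet (G : SimpleGraph V) : Set V := ⋂₀ {S : Set V | IsMaxCriticalIndep G S}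

/-- `C` is the vertex set of some odd cycle of `G`. -/
def IsOddCycleVertexSet (G : SimpleGraph V) (C : Set V) : Prop :=
  ∃ (v : V) (w : G.Walk v v), w.IsCycle ∧ Odd w.length ∧ {x | x ∈ w.support} = C

/-- The maximum cardinality of a set of pairwise vertex-distinct odd cycles of `G`,
i.e. the number of distinct vertex sets of odd cycles of `G`. -/
noncomputable def numVertexDistinctOddCycles (G : SimpleGraph V) : ℕ :=
  {C : Set V | IsOddCycleVertexSet G C}.ncard

/-- `E` is the edge set of some odd cycle of `G`. -/
def IsOddCycleEdgeSet (G : SimpleGraph V) (E : Set (Sym2 V)) : Prop :=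
  ∃ (v : V) (w : G.Walk v v), w.IsCycle ∧ Odd w.length ∧ {e | e ∈ w.edges} = E

/-- The number of (distinct) odd cycles of `G`, where a cycle is identified with
its edge set. -/
noncomputable def numOddCycles (G : SimpleGraph V) : ℕ :=
  {E : Set (Sym2 V) | IsOddCycleEdgeSet G E}.ncard

/-!
Let `P = corona(G) \ core(G)`. Deleting a vertex of an odd cycle inside `P` destroys at least one
vertex set of an odd cycle, and once `P` contains no odd cycle, `G[P]` is bipartite, so one colour
class covers half of it; hence `P` contains an independent set `S` with `|P| ≤ 2|S| + k`. A vertex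
of the corona lies in a maximum independent set, which contains the core, so no edge joins the
corona to the core and `S ∪ core(G)` is independent: `|S| + |core(G)| ≤ α(G)`. Adding up,
`|corona(G)| + |core(G)| = |P| + 2|core(G)| ≤ 2α(G) + k`.
-/

namespace SimpleGraph

variable {α : Type*} {G : SimpleGraph α}

theorem Walk.IsPath.odd_length_of_adj
    (hG : ∀ (v : α) (c : G.Walk v v), c.IsCycle → Even c.length)
    {u w : α} {t : G.Walk w u} (ht : t.IsPath) (h : G.Adj u w) : Odd t.length := by
  have hpos : t.length ≠ 0 := fun h0 => h.ne (Walk.eq_of_length_eq_zero h0).symm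
  by_cases hlen : 2 ≤ t.length
  · -- A path of length at least 2 cannot contain the edge `uw`, so it closes up to a cycle.
    have hcyc : (Walk.cons h t).IsCycle :=
      Walk.isCycle_iff_isPath_tail_and_le_length.mpr
        ⟨by simpa using ht, by rw [Walk.length_cons]; omega⟩
    simpa [Nat.even_add_one] using hG u _ hcyc
  · exact ⟨0, by omega⟩

theorem Walk.exists_isPath_even_length_add [DecidableEq α]
    (hG : ∀ (v : α) (c : G.Walk v v), c.IsCycle → Even c.length) {u v : α} (p : G.Walk u v) :
    ∃ q : G.Walk u v, q.IsPath ∧ Even (p.length + q.length) := by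
  induction p with
  | nil => exact ⟨nil, .nil, by simp⟩
  | @cons u w v h p ih =>
    obtain ⟨q, hq, hpq⟩ := ih
    by_cases hu : u ∈ q.support
    · -- The piece of `q` before `u` closes up with the edge `uw`, so it has odd length.
      refine ⟨q.dropUntil u hu, hq.dropUntil hu, ?_⟩
      have hsplit : (q.takeUntil u hu).length + (q.dropUntil u hu).length = q.length := by
        rw [← length_append, take_spec]
      have hodd := (hq.takeUntil hu).odd_length_of_adj hG h
      simp only [length_cons, Nat.even_iff, Nat.odd_iff] at hpq hodd ⊢
      omega
    · refine ⟨cons h q, hq.cons hu, ?_⟩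
      simp only [length_cons, Nat.even_iff] at hpq ⊢
      omega

theorem colorable_two_of_forall_isCycle_even
    (hG : ∀ (v : α) (c : G.Walk v v), c.IsCycle → Even c.length) : G.Colorable 2 := by
  classical
  refine two_colorable_iff_forall_loop_even.mpr fun u p => ?_
  obtain ⟨q, hq, hpq⟩ := p.exists_isPath_even_length_add hG
  rwa [Walk.length_eq_zero_iff.mpr (Walk.isPath_iff_nil.mp hq), add_zero] at hpq

theorem Coloring.exists_card_le_two_mul_ncard_colorClass [Finite α] (C : G.Coloring (Fin 2)) :
    ∃ c, Nat.card α ≤ 2 * (C.colorClass c).ncard := by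
  have hcover : Set.univ ⊆ C.colorClass 0 ∪ C.colorClass 1 := fun v _ => by
    simp only [Set.mem_union, Coloring.colorClass, Set.mem_ofPred_eq]
    omega
  have hcard : Nat.card α ≤ (C.colorClass 0).ncard + (C.colorClass 1).ncard := by
    rw [← Set.ncard_univ]
    exact (Set.ncard_le_ncard hcover).trans (Set.ncard_union_le _ _)
  rcases le_total (C.colorClass 0).ncard (C.colorClass 1).ncard with h | h
  · exact ⟨1, by omega⟩
  · exact ⟨0, by omega⟩

end SimpleGraph

section

variable {α : Type*} {G : SimpleGraph α}

def oddCyclesIn (G : SimpleGraph α) (P : Set α) : Set (Set α) :=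
  {C | IsOddCycleVertexSet G C ∧ C ⊆ P}

theorem IsOddCycleVertexSet.nonempty {C : Set α} (hC : IsOddCycleVertexSet G C) : C.Nonempty := by
  obtain ⟨v, w, -, -, rfl⟩ := hC
  exact ⟨v, w.start_mem_support⟩

theorem ncard_oddCyclesIn_le [Finite α] (P : Set α) :
    (oddCyclesIn G P).ncard ≤ numVertexDistinctOddCycles G :=
  Set.ncard_le_ncard (fun _ hC => hC.1)

theorem ncard_oddCyclesIn_diff_singleton_lt [Finite α] {P C : Set α} {v : α}
    (hC : C ∈ oddCyclesIn G P) (hv : v ∈ C) :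
    (oddCyclesIn G (P \ {v})).ncard < (oddCyclesIn G P).ncard := by
  refine Set.ncard_lt_ncard
    ⟨fun D hD => ⟨hD.1, hD.2.trans Set.sdiff_subset⟩, fun hsub => ((hsub hC).2 hv).2 rfl⟩

open SimpleGraph in
theorem exists_isIndep_subset_of_oddCyclesIn_eq_empty [Finite α] {P : Set α}
    (hP : oddCyclesIn G P = ∅) : ∃ S ⊆ P, IsIndep G S ∧ P.ncard ≤ 2 * S.ncard := by
  have hcyc : ∀ (v : P) (c : (G.induce P).Walk v v), c.IsCycle → Even c.length := by
    intro v c hc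
    by_contra hodd
    let f : G.induce P →g G := (Embedding.induce P).toHom
    have hmem : {x | x ∈ (c.map f).support} ∈ oddCyclesIn G P := by
      refine ⟨⟨f v, c.map f, (Walk.isCycle_map_iff_of_injective Subtype.val_injective).mpr hc,
        by rwa [Walk.length_map, ← Nat.not_even_iff_odd], rfl⟩, ?_⟩
      intro x hx
      simp only [Set.mem_ofPred_eq, Walk.support_map, List.mem_map] at hx
      obtain ⟨y, -, rfl⟩ := hx
      exact y.2
    simp [hP] at hmem
  obtain ⟨C⟩ := colorable_two_of_forall_isCycle_even hcyc
  obtain ⟨c, hc⟩ := C.exists_card_le_two_mul_ncard_colorClass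
  refine ⟨Subtype.val '' C.colorClass c, Subtype.coe_image_subset _ _, ?_, ?_⟩
  · rintro _ ⟨x, hx, rfl⟩ _ ⟨y, hy, rfl⟩
    exact C.not_adj_of_mem_colorClass hx hy
  · rwa [Set.ncard_image_of_injective _ Subtype.val_injective, ← Nat.card_coe_set_eq]

theorem exists_isIndep_subset_ncard_le [Finite α] (P : Set α) :
    ∃ S ⊆ P, IsIndep G S ∧ P.ncard ≤ 2 * S.ncard + (oddCyclesIn G P).ncard := by
  induction hn : P.ncard using Nat.strong_induction_on generalizing P with
  | _ n ih =>
    rcases (oddCyclesIn G P).eq_empty_or_nonempty with hP | ⟨C, hC⟩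
    · obtain ⟨S, hSP, hS, hcard⟩ := exists_isIndep_subset_of_oddCyclesIn_eq_empty hP
      exact ⟨S, hSP, hS, by omega⟩
    · obtain ⟨v, hv⟩ := hC.1.nonempty
      have hdel := Set.ncard_sdiff_singleton_add_one (hC.2 hv)
      have hlt := ncard_oddCyclesIn_diff_singleton_lt hC hv
      obtain ⟨S, hSP, hS, hcard⟩ := ih _ (by omega) (P \ {v}) rfl
      exact ⟨S, hSP.trans Set.sdiff_subset, hS, by omega⟩

theorem bddAbove_indepSet_ncards [Finite α] :
    BddAbove {n | ∃ S : Set α, IsIndep G S ∧ S.ncard = n} :=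
  ⟨Nat.card α, by rintro _ ⟨S, -, rfl⟩; exact Set.ncard_le_card S⟩

theorem IsIndep.ncard_le_indepNum [Finite α] {S : Set α} (hS : IsIndep G S) :
    S.ncard ≤ indepNum G :=
  le_csSup bddAbove_indepSet_ncards ⟨S, hS, rfl⟩

theorem exists_isMaxIndep [Finite α] : ∃ S, IsMaxIndep G S := by
  have hne : {n | ∃ S : Set α, IsIndep G S ∧ S.ncard = n}.Nonempty :=
    ⟨0, ∅, fun _ h => h.elim, Set.ncard_empty α⟩
  obtain ⟨S, hS, hcard⟩ := Nat.sSup_mem hne bddAbove_indepSet_ncards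
  exact ⟨S, hS, fun T hT => hcard ▸ hT.ncard_le_indepNum⟩

theorem coreSet_subset_coronaSet [Finite α] : coreSet G ⊆ coronaSet G := by
  obtain ⟨S, hS⟩ := exists_isMaxIndep (G := G)
  exact (Set.sInter_subset_of_mem hS).trans (Set.subset_sUnion_of_mem hS)

theorem not_adj_of_mem_coronaSet_of_mem_coreSet {u v : α} (hu : u ∈ coronaSet G)
    (hv : v ∈ coreSet G) : ¬ G.Adj u v := by
  obtain ⟨T, hT, huT⟩ := hu
  exact hT.1 huT (hv T hT)

theorem IsIndep.union_coreSet [Finite α] {S : Set α} (hS : IsIndep G S)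
    (hSc : S ⊆ coronaSet G) :
    IsIndep G (S ∪ coreSet G) := by
  have hcorona : S ∪ coreSet G ⊆ coronaSet G := Set.union_subset hSc coreSet_subset_coronaSet
  rintro u hu v (hvS | hvcore)
  · rcases hu with huS | hucore
    · exact hS huS hvS
    · exact fun h => not_adj_of_mem_coronaSet_of_mem_coreSet (hSc hvS) hucore h.symm
  · exact not_adj_of_mem_coronaSet_of_mem_coreSet (hcorona hu) hvcore

end

/-- For every finite simple graph `G`,
`|corona(G)| + |core(G)| ≤ 2·α(G) + k`, where `k` is the maximum cardinality of a
set of pairwise vertex-distinct odd cycles of `G`. -/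
theorem corona_core_le_two_alpha_add_vertexDistinctOddCycles (G : SimpleGraph V) :
    (coronaSet G).ncard + (coreSet G).ncard ≤
      2 * indepNum G + numVertexDistinctOddCycles G := by
  obtain ⟨S, hSP, hS, hcount⟩ :=
    exists_isIndep_subset_ncard_le (G := G) (coronaSet G \ coreSet G)
  have hdisj : Disjoint S (coreSet G) := Set.disjoint_of_subset_left hSP Set.disjoint_sdiff_left
  have hindep : S.ncard + (coreSet G).ncard ≤ indepNum G := by
    rw [← Set.ncard_union_eq hdisj]
    exact (hS.union_coreSet (hSP.trans Set.sdiff_subset)).ncard_le_indepNum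
  have hsplit := Set.ncard_sdiff_add_ncard_of_subset (coreSet_subset_coronaSet (G := G))
  have hk := ncard_oddCyclesIn_le (G := G) (coronaSet G \ coreSet G)
  omega
end

section
/- For every finite simple graph G, |corona(G)| + |ker(G)| ≤ 2·α(G) + k, where k is the number of odd cycles in G. -/
variable {V : Type*} [Fintype V] [DecidableEq V]

/-!
Let `I` be a critical independent set of minimum cardinality. Every maximum independent set `T`
avoids `N(I)`: with `B = T ∩ N(I)` and `A = I ∩ N(B)`, exchanging `B` for `I` in `T` shows
`|A| ≤ |B|` by maximality of `T`, so `I \ N(B)` is again critical, and minimality of `I` forces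
`A = ∅`, hence `B = ∅`. Thus `corona(G) ⊆ V \ N(I)` and `ker(G) ⊆ I`, and it remains to bound
`|V \ N(I)| + |I| ≤ 2α(G) + k` for every independent `I`. Without odd cycles `G` is bipartite, and
`I` together with the part of either colour class outside `I ∪ N(I)` is independent. Otherwise,
deleting a vertex outside `I` on an odd cycle loses at most one vertex of `V \ N(I)`, does not
increase `α` and destroys at least one odd cycle.
-/

open Set

theorem SimpleGraph.Walk.exists_isCycle_odd_length {α : Type*} {G : SimpleGraph α} {u : α}
    (w : G.Walk u u) (hw : Odd w.length) :
    ∃ (v : α) (c : G.Walk v v), c.IsCycle ∧ Odd c.length := by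
  induction hn : w.length using Nat.strong_induction_on generalizing u with
  | _ n ih =>
  subst hn
  cases w with
  | nil => simp at hw
  | cons h p =>
    by_cases hp : p.IsPath
    · refine ⟨u, .cons h p,
        SimpleGraph.Walk.isCycle_iff_isPath_tail_and_le_length.mpr ⟨by simpa, ?_⟩, hw⟩
      have : p.length ≠ 0 := fun h0 => by
        cases p.eq_of_length_eq_zero h0
        exact h.ne rfl
      rw [SimpleGraph.Walk.length_cons] at hw ⊢
      obtain ⟨m, hm⟩ := hw
      omega
    · -- a repeated vertex splits the walk into two shorter closed walks, one of them odd
      obtain ⟨x, c, ⟨p₁, p₂, rfl⟩, hc⟩ := by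
        simpa using mt SimpleGraph.Walk.isPath_iff_isSubwalk_imp_nil.mpr hp
      have hc : 0 < c.length := SimpleGraph.Walk.not_nil_iff_lt_length.mp hc
      set w' := SimpleGraph.Walk.cons h (p₁.append p₂)
      have hlen : (SimpleGraph.Walk.cons h (p₁.append c |>.append p₂)).length
          = w'.length + c.length := by
        simp only [w', SimpleGraph.Walk.length_cons, SimpleGraph.Walk.length_append]; omega
      rcases Nat.even_or_odd c.length with hce | hco
      · exact ih _ (by omega) w' (by rw [hlen] at hw; exact (Nat.odd_add.mp hw).mpr hce) rfl
      · exact ih _ (by simp only [hlen, w', SimpleGraph.Walk.length_cons]; omega) c hco rfl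

theorem SimpleGraph.colorable_two_of_forall_isCycle_not_odd {α : Type*} {G : SimpleGraph α}
    (h : ∀ (v : α) (c : G.Walk v v), c.IsCycle → ¬Odd c.length) : G.Colorable 2 :=
  SimpleGraph.two_colorable_iff_forall_loop_even.mpr fun _ w => Nat.not_odd_iff_even.mp fun hw =>
    let ⟨v, c, hc, hodd⟩ := w.exists_isCycle_odd_length hw
    h v c hc hodd

section Independence

variable {α β : Type*} {G : SimpleGraph α} {H : SimpleGraph β} {I S T : Set α}

theorem IsIndep.mono (hT : IsIndep G T) (hST : S ⊆ T) : IsIndep G S :=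
  fun _ hu _ hv => hT (hST hu) (hST hv)

theorem IsIndep.union (hS : IsIndep G S) (hT : IsIndep G T) (h : Disjoint T (nbhdSet G S)) :
    IsIndep G (S ∪ T) := by
  rintro u (hu | hu) v (hv | hv) huv
  · exact hS hu hv huv
  · exact h.notMem_of_mem_left hv ⟨u, hu, huv⟩
  · exact h.notMem_of_mem_left hu ⟨v, hv, huv.symm⟩
  · exact hT hu hv huv

theorem IsIndep.preimage (f : H →g G) (hI : IsIndep G I) : IsIndep H (f ⁻¹' I) :=
  fun _ ha _ hb hab => hI ha hb (f.map_adj hab)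

theorem IsIndep.image (f : H ↪g G) {J : Set β} (hJ : IsIndep H J) : IsIndep G (f '' J) := by
  rintro _ ⟨a, ha, rfl⟩ _ ⟨b, hb, rfl⟩ hab
  exact hJ ha hb (f.map_adj_iff.mp hab)

theorem bddAbove_indepNum_set [Finite α] (G : SimpleGraph α) :
    BddAbove {n | ∃ S : Set α, IsIndep G S ∧ S.ncard = n} :=
  ⟨Nat.card α, by rintro _ ⟨S, -, rfl⟩; exact ncard_le_card S⟩

theorem IsIndep.ncard_le_indepNum_s2 [Finite α] (hI : IsIndep G I) : I.ncard ≤ indepNum G :=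
  le_csSup (bddAbove_indepNum_set G) ⟨I, hI, rfl⟩

theorem exists_isIndep_ncard_eq_indepNum [Finite α] (G : SimpleGraph α) :
    ∃ S, IsIndep G S ∧ S.ncard = indepNum G :=
  Nat.sSup_mem (s := {n | ∃ S : Set α, IsIndep G S ∧ S.ncard = n})
    ⟨0, ∅, fun _ h => h.elim, ncard_empty α⟩ (bddAbove_indepNum_set G)

theorem indepNum_le_of_embedding [Finite α] [Finite β] (f : H ↪g G) :
    indepNum H ≤ indepNum G := by
  obtain ⟨J, hJ, hJcard⟩ := exists_isIndep_ncard_eq_indepNum H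
  rw [← hJcard, ← ncard_image_of_injective J f.injective]
  exact (hJ.image f).ncard_le_indepNum_s2

end Independence

section Critical

variable {α : Type*} [Finite α] {G : SimpleGraph α} {I T B : Set α}

theorem exists_isCriticalIndep_ncard_le (G : SimpleGraph α) :
    ∃ I, IsCriticalIndep G I ∧ ∀ J, IsCriticalIndep G J → I.ncard ≤ J.ncard := by
  obtain ⟨I, hI, hmax⟩ := exists_max_image {S : Set α | IsIndep G S} (diffSet G) (toFinite _)
    ⟨∅, fun _ h => h.elim⟩
  obtain ⟨J, hJ, hmin⟩ := exists_min_image {S | IsCriticalIndep G S} ncard (toFinite _)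
    ⟨I, hI, hmax⟩
  exact ⟨J, hJ, hmin⟩

theorem diffSet_add_ncard_le_diffSet_sdiff_nbhdSet (hB : B ⊆ nbhdSet G I) :
    diffSet G I + B.ncard ≤ diffSet G (I \ nbhdSet G B) + (I ∩ nbhdSet G B).ncard := by
  have hN : nbhdSet G (I \ nbhdSet G B) ⊆ nbhdSet G I \ B := by
    rintro x ⟨u, ⟨huI, huB⟩, hux⟩
    exact ⟨⟨u, huI, hux⟩, fun hxB => huB ⟨x, hxB, hux.symm⟩⟩
  have h₁ := ncard_le_ncard hN
  have h₂ := ncard_sdiff_add_ncard_of_subset hB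
  have h₃ := ncard_inter_add_ncard_sdiff_eq_ncard I (nbhdSet G B)
  unfold diffSet
  omega

theorem IsMaxIndep.disjoint_nbhdSet (hI : IsCriticalIndep G I)
    (hmin : ∀ J, IsCriticalIndep G J → I.ncard ≤ J.ncard) (hT : IsMaxIndep G T) :
    Disjoint T (nbhdSet G I) := by
  set B := T ∩ nbhdSet G I
  set A := I ∩ nbhdSet G B
  have hAT : Disjoint A T := disjoint_left.mpr fun a ⟨_, _, hb, hba⟩ haT => hT.1 hb.1 haT hba
  have hAB : A.ncard ≤ B.ncard := by
    have hindep : IsIndep G (I ∪ (T \ nbhdSet G I)) :=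
      hI.1.union (hT.1.mono sdiff_subset) disjoint_sdiff_left
    have hsub : (T \ nbhdSet G I) ∪ A ⊆ I ∪ (T \ nbhdSet G I) :=
      union_subset subset_union_right (inter_subset_left.trans subset_union_left)
    have h₁ := ncard_le_ncard hsub
    rw [ncard_union_eq (disjoint_of_subset_left sdiff_subset hAT.symm)] at h₁
    have h₂ := hT.2 _ hindep
    have h₃ : B.ncard + (T \ nbhdSet G I).ncard = T.ncard :=
      ncard_inter_add_ncard_sdiff_eq_ncard _ _
    omega
  have hcrit : IsCriticalIndep G (I \ nbhdSet G B) := by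
    refine ⟨hI.1.mono sdiff_subset, fun J hJ => ?_⟩
    have : diffSet G I + B.ncard ≤ diffSet G (I \ nbhdSet G B) + A.ncard :=
      diffSet_add_ncard_le_diffSet_sdiff_nbhdSet inter_subset_right
    have := hI.2 J hJ
    omega
  have hA : A = ∅ := by
    have h₁ := hmin _ hcrit
    have h₂ : A.ncard + (I \ nbhdSet G B).ncard = I.ncard :=
      ncard_inter_add_ncard_sdiff_eq_ncard _ _
    exact (ncard_eq_zero (toFinite A)).mp (by omega)
  refine disjoint_left.mpr fun x hxT ⟨u, hu, hux⟩ => ?_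
  exact (hA ▸ ⟨hu, x, ⟨hxT, u, hu, hux⟩, hux.symm⟩ : u ∈ (∅ : Set α))

theorem coronaSet_subset_compl_nbhdSet (hI : IsCriticalIndep G I)
    (hmin : ∀ J, IsCriticalIndep G J → I.ncard ≤ J.ncard) : coronaSet G ⊆ (nbhdSet G I)ᶜ :=
  sUnion_subset fun _ hT => (IsMaxIndep.disjoint_nbhdSet hI hmin hT).subset_compl_right

end Critical

section Deletion

variable {α β : Type*} {G : SimpleGraph α} {H : SimpleGraph β} {I : Set α}

theorem IsIndep.exists_mem_support_notMem (hI : IsIndep G I) {u v : α} {w : G.Walk u v}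
    (hw : ¬w.Nil) : ∃ x ∈ w.support, x ∉ I := by
  by_contra! h
  exact hI (h _ w.start_mem_support) (h _ (w.getVert_mem_support 1)) (w.adj_snd hw)

theorem IsIndep.ncard_add_ncard_sdiff_le_indepNum [Finite α] {C : Set α} (hI : IsIndep G I)
    (hC : IsIndep G C) : I.ncard + (C \ (I ∪ nbhdSet G I)).ncard ≤ indepNum G := by
  rw [← ncard_union_eq (disjoint_sdiff_right.mono_left subset_union_left)]
  exact (hI.union (hC.mono sdiff_subset)
    (disjoint_sdiff_left.mono_right subset_union_right)).ncard_le_indepNum_s2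

theorem IsIndep.ncard_compl_nbhdSet_add_ncard_le_of_colorable [Finite α] (hG : G.Colorable 2)
    (hI : IsIndep G I) : (nbhdSet G I)ᶜ.ncard + I.ncard ≤ 2 * indepNum G := by
  obtain ⟨c⟩ := hG
  have hclass (i : Fin 2) : IsIndep G {x | c x = i} :=
    fun _ hu _ hv huv => c.valid huv (hu.trans hv.symm)
  set D := fun i : Fin 2 => {x | c x = i} \ (I ∪ nbhdSet G I)
  have hcover : (nbhdSet G I)ᶜ ⊆ I ∪ D 0 ∪ D 1 := by
    intro x hx
    by_cases hxI : x ∈ I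
    · exact Or.inl (Or.inl hxI)
    · have hxD (i : Fin 2) (hi : c x = i) : x ∈ D i := ⟨hi, by rintro (h | h) <;> contradiction⟩
      rcases Fin.exists_fin_two.mp ⟨c x, rfl⟩ with h | h
      · exact Or.inl (Or.inr (hxD 0 h))
      · exact Or.inr (hxD 1 h)
  have h₀ := hI.ncard_add_ncard_sdiff_le_indepNum (hclass 0)
  have h₁ := hI.ncard_add_ncard_sdiff_le_indepNum (hclass 1)
  have hD := (ncard_le_ncard hcover).trans
    ((ncard_union_le _ _).trans (Nat.add_le_add_right (ncard_union_le _ _) _))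
  simp only [D] at hD
  omega

theorem ncard_compl_nbhdSet_add_ncard_le_of_embedding [Finite α] (f : H ↪g G) (hI : I ⊆ range f) :
    (nbhdSet G I)ᶜ.ncard + I.ncard ≤
      (nbhdSet H (f ⁻¹' I))ᶜ.ncard + (f ⁻¹' I).ncard + (range f)ᶜ.ncard := by
  have hsub : (nbhdSet G I)ᶜ ⊆ f '' (nbhdSet H (f ⁻¹' I))ᶜ ∪ (range f)ᶜ := by
    intro x hx
    by_cases hxf : x ∈ range f
    · obtain ⟨y, rfl⟩ := hxf
      exact Or.inl ⟨y, fun ⟨z, hz, hzy⟩ => hx ⟨f z, hz, f.map_adj_iff.mpr hzy⟩, rfl⟩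
    · exact Or.inr hxf
  have h := (ncard_le_ncard hsub).trans (ncard_union_le _ _)
  rw [ncard_image_of_injective _ f.injective] at h
  rw [ncard_preimage_of_injective_subset_range f.injective hI]
  omega

theorem IsOddCycleEdgeSet.image (f : H ↪g G) {E : Set (Sym2 β)} (hE : IsOddCycleEdgeSet H E) :
    IsOddCycleEdgeSet G (Sym2.map f '' E) := by
  obtain ⟨v, w, hw, hodd, rfl⟩ := hE
  refine ⟨f v, w.map f.toHom,
    (SimpleGraph.Walk.isCycle_map_iff_of_injective f.injective).mpr hw, by simpa, ?_⟩
  ext e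
  simp [SimpleGraph.Walk.edges_map]

theorem numOddCycles_lt_of_embedding [Finite α] (f : H ↪g G) {u v : α} {w : G.Walk u u}
    (hw : w.IsCycle) (hodd : Odd w.length) (hv : v ∈ w.support) (hvf : v ∉ range f) :
    numOddCycles H < numOddCycles G := by
  have hinj : Function.Injective (image (Sym2.map f)) :=
    image_injective.mpr (Sym2.map.injective f.injective)
  rw [numOddCycles, numOddCycles, ← ncard_image_of_injective _ hinj]
  refine ncard_lt_ncard ⟨?_, fun hsub => ?_⟩
  · rintro _ ⟨E, hE, rfl⟩
    exact hE.image f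
  · obtain ⟨e, he, hve⟩ :=
      (SimpleGraph.Walk.mem_support_iff_exists_mem_edges_of_not_nil hw.not_nil).mp hv
    obtain ⟨E, -, hEw⟩ := hsub ⟨u, w, hw, hodd, rfl⟩
    obtain ⟨e', -, rfl⟩ : e ∈ Sym2.map f '' E := hEw ▸ he
    obtain ⟨a, -, rfl⟩ := Sym2.mem_map.mp hve
    exact hvf ⟨a, rfl⟩

end Deletion

universe u

theorem IsIndep.ncard_compl_nbhdSet_add_ncard_le {α : Type u} [Finite α] {G : SimpleGraph α}
    {I : Set α} (hI : IsIndep G I) :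
    (nbhdSet G I)ᶜ.ncard + I.ncard ≤ 2 * indepNum G + numOddCycles G := by
  induction hk : numOddCycles G using Nat.strong_induction_on generalizing α with
  | _ k ih =>
  by_cases hcycle : ∃ (u : α) (w : G.Walk u u), w.IsCycle ∧ Odd w.length
  · obtain ⟨u, w, hw, hodd⟩ := hcycle
    obtain ⟨v, hv, hvI⟩ := hI.exists_mem_support_notMem hw.not_nil
    let f := SimpleGraph.Embedding.induce ({v}ᶜ : Set α) (G := G)
    have hrange : range f = {v}ᶜ := Subtype.range_coe
    have hlt := numOddCycles_lt_of_embedding f hw hodd hv (by simp [hrange])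
    have hIH : (nbhdSet _ (f ⁻¹' I))ᶜ.ncard + (f ⁻¹' I).ncard ≤ _ :=
      ih _ (hk ▸ hlt) (hI.preimage f.toHom) rfl
    have hdel := ncard_compl_nbhdSet_add_ncard_le_of_embedding f (I := I)
      (by rw [hrange]; exact fun x hx (hxv : x = v) => hvI (hxv ▸ hx))
    rw [hrange, compl_compl, ncard_singleton] at hdel
    have := indepNum_le_of_embedding f
    omega
  · simp only [not_exists, not_and] at hcycle
    have := hI.ncard_compl_nbhdSet_add_ncard_le_of_colorable
      (SimpleGraph.colorable_two_of_forall_isCycle_not_odd hcycle)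
    omega

/-- For every finite simple graph `G`,
`|corona(G)| + |ker(G)| ≤ 2·α(G) + k`, where `k` is the number of odd cycles of `G`. -/
theorem corona_ker_le_two_alpha_add_numOddCycles (G : SimpleGraph V) :
    (coronaSet G).ncard + (kerSet G).ncard ≤ 2 * indepNum G + numOddCycles G := by
  obtain ⟨I, hI, hmin⟩ := exists_isCriticalIndep_ncard_le G
  calc (coronaSet G).ncard + (kerSet G).ncard ≤ (nbhdSet G I)ᶜ.ncard + I.ncard :=
        add_le_add (ncard_le_ncard (coronaSet_subset_compl_nbhdSet hI hmin))
          (ncard_le_ncard (sInter_subset_of_mem hI))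
    _ ≤ 2 * indepNum G + numOddCycles G := hI.1.ncard_compl_nbhdSet_add_ncard_le
end

section
/- For every finite simple graph G of order n, n ≤ 2·α(G) + k, where k is the maximum cardinality of a set of pairwise vertex-distinct odd cycles of G. -/
variable {V : Type*} [Fintype V] [DecidableEq V]

/-!
Choose one vertex on each of the `k` vertex sets of odd cycles. Deleting these at most `k`
vertices leaves a graph without odd cycles, hence without odd closed walks, hence bipartite;
the larger colour class is an independent set with at least `(n - k) / 2` vertices.
-/

namespace SimpleGraph.Walk

variable {α : Type*} {G : SimpleGraph α}

theorem exists_eq_append_of_not_isPath {u v : α} :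
    ∀ (p : G.Walk u v), ¬p.IsPath →
      ∃ (x : α) (q : G.Walk u x) (c : G.Walk x x) (r : G.Walk x v),
        ¬c.Nil ∧ p = q.append (c.append r)
  | nil, hp => absurd IsPath.nil hp
  | cons h p, hp => by
    classical
    by_cases hp' : p.IsPath
    · have hu : u ∈ p.support := by
        by_contra hu
        exact hp ((cons_isPath_iff h p).mpr ⟨hp', hu⟩)
      refine ⟨u, nil, cons h (p.takeUntil u hu), p.dropUntil u hu, not_nil_cons, ?_⟩
      simp only [nil_append, cons_append, take_spec]
    · obtain ⟨x, q, c, r, hc, rfl⟩ := exists_eq_append_of_not_isPath p hp'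
      exact ⟨x, cons h q, c, r, hc, rfl⟩

theorem exists_isCycle_odd_length_s3 {u : α} (w : G.Walk u u) (hw : Odd w.length) :
    ∃ (v : α) (c : G.Walk v v), c.IsCycle ∧ Odd c.length := by
  induction hn : w.length using Nat.strong_induction_on generalizing u with
  | _ n ih =>
  cases w with
  | nil => simp at hw
  | cons h p =>
    by_cases hp : p.IsPath
    · have hp0 : p.length ≠ 0 := fun h0 => h.ne (eq_of_length_eq_zero h0).symm
      refine ⟨u, cons h p,
        isCycle_iff_isPath_tail_and_le_length.mpr ⟨by simpa using hp, ?_⟩, hw⟩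
      rw [length_cons] at hw ⊢
      obtain ⟨k, hk⟩ := hw
      omega
    · -- Cutting the closed subwalk `c` out of `w` leaves a shorter closed walk at `u`;
      -- the lengths of the two add up to `w.length`, so one of them is odd.
      obtain ⟨x, q, c, r, hc, rfl⟩ := exists_eq_append_of_not_isPath p hp
      have hlen : n = c.length + (cons h (q.append r)).length := by
        simp only [← hn, length_cons, length_append]
        omega
      have hc0 : c.length ≠ 0 := fun h0 => hc (length_eq_zero_iff.mp h0)
      rcases Nat.even_or_odd c.length with hce | hco
      · exact ih _ (by rw [length_cons] at hlen ⊢; omega) (cons h (q.append r))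
          ((Nat.odd_add'.mp (hlen ▸ hn ▸ hw)).mpr hce) rfl
      · exact ih _ (by rw [length_cons] at hlen; omega) c hco rfl

end SimpleGraph.Walk

theorem Set.Finite.exists_ncard_le_forall_inter_nonempty {α : Type*} {𝒞 : Set (Set α)}
    (h𝒞 : 𝒞.Finite) (hne : ∀ C ∈ 𝒞, C.Nonempty) :
    ∃ X : Set α, X.ncard ≤ 𝒞.ncard ∧ ∀ C ∈ 𝒞, (C ∩ X).Nonempty := by
  choose f hf using hne
  have := h𝒞.to_subtype
  exact ⟨Set.range fun C : 𝒞 => f C C.2, Finite.card_range_le _,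
    fun C hC => ⟨f C hC, hf C hC, ⟨C, hC⟩, rfl⟩⟩

section

variable {W : Type*}

theorem IsIndep.ncard_le_indepNum_s3 [Finite W] {G : SimpleGraph W} {T : Set W}
    (hT : IsIndep G T) : T.ncard ≤ indepNum G :=
  le_csSup ⟨Nat.card W, by rintro _ ⟨S, -, rfl⟩; exact S.ncard_le_card⟩ ⟨T, hT, rfl⟩

theorem exists_isIndep_ncard_le_two_mul_of_colorable_induce [Finite W] (G : SimpleGraph W)
    (S : Set W) (hS : (G.induce S).Colorable 2) :
    ∃ T : Set W, IsIndep G T ∧ S.ncard ≤ 2 * T.ncard := by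
  obtain ⟨col⟩ := hS
  let colorClass : Fin 2 → Set W := fun i => {v | ∃ h : v ∈ S, col ⟨v, h⟩ = i}
  have hindep : ∀ i, IsIndep G (colorClass i) := by
    rintro i u ⟨hu, rfl⟩ v ⟨hv, hcol⟩ huv
    exact col.valid
      (SimpleGraph.induce_adj.mpr huv : (G.induce S).Adj ⟨u, hu⟩ ⟨v, hv⟩) hcol.symm
  have hcover : S ⊆ colorClass 0 ∪ colorClass 1 := fun v hv => by
    match h : col ⟨v, hv⟩ with
    | 0 => exact Or.inl ⟨hv, h⟩
    | 1 => exact Or.inr ⟨hv, h⟩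
  have hcard := (Set.ncard_le_ncard hcover).trans (Set.ncard_union_le _ _)
  rcases le_total (colorClass 0).ncard (colorClass 1).ncard with h | h
  · exact ⟨_, hindep 1, by omega⟩
  · exact ⟨_, hindep 0, by omega⟩

def IsOddCycleTransversal (G : SimpleGraph W) (X : Set W) : Prop :=
  ∀ C, IsOddCycleVertexSet G C → (C ∩ X).Nonempty

theorem exists_isOddCycleTransversal_ncard_le [Finite W] (G : SimpleGraph W) :
    ∃ X, IsOddCycleTransversal G X ∧ X.ncard ≤ numVertexDistinctOddCycles G := by
  obtain ⟨X, hX, hmeet⟩ :=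
    (Set.toFinite {C | IsOddCycleVertexSet G C}).exists_ncard_le_forall_inter_nonempty
      (by rintro C ⟨v, w, -, -, rfl⟩; exact ⟨v, w.start_mem_support⟩)
  exact ⟨X, hmeet, hX⟩

theorem IsOddCycleTransversal.colorable_induce_compl {G : SimpleGraph W} {X : Set W}
    (hX : IsOddCycleTransversal G X) : (G.induce Xᶜ).Colorable 2 := by
  refine SimpleGraph.two_colorable_iff_forall_loop_even.mpr fun u w =>
    Nat.not_odd_iff_even.mp fun hw => ?_
  obtain ⟨v, c, hc, hodd⟩ := w.exists_isCycle_odd_length_s3 hw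
  let e : G.induce Xᶜ ↪g G := SimpleGraph.Embedding.induce Xᶜ
  obtain ⟨x, hxc, hxX⟩ :=
    hX _ ⟨_, c.map e.toHom, hc.map e.injective, by rwa [SimpleGraph.Walk.length_map], rfl⟩
  simp only [Set.mem_ofPred_eq, SimpleGraph.Walk.support_map, List.mem_map] at hxc
  obtain ⟨y, -, rfl⟩ := hxc
  exact y.2 hxX

end

/-- For every finite simple graph `G` of order `n`,
`n ≤ 2·α(G) + k`, where `k` is the maximum cardinality of a set of pairwise
vertex-distinct odd cycles of `G`. -/
theorem card_le_two_alpha_add_vertexDistinctOddCycles (G : SimpleGraph V) :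
    Fintype.card V ≤ 2 * indepNum G + numVertexDistinctOddCycles G := by
  obtain ⟨X, hX, hXcard⟩ := exists_isOddCycleTransversal_ncard_le G
  obtain ⟨T, hT, hXT⟩ :=
    exists_isIndep_ncard_le_two_mul_of_colorable_induce G Xᶜ hX.colorable_induce_compl
  have hcard : X.ncard + Xᶜ.ncard = Fintype.card V := by
    rw [Set.ncard_add_ncard_compl, Nat.card_eq_fintype_card]
  have hTα := hT.ncard_le_indepNum_s3
  omega
end

section
/- Let G be a finite simple graph, let I_c be a critical independent set of G, and let I_M be a maximum independent set of G. Set C = I_c ∩ I_M, A = I_c \ C, and B = N(A) ∩ I_M. Then |A| = |B| and the set (I_M \ B) ∪ A is a maximum independent set of G. -/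
variable {V : Type*} [Fintype V] [DecidableEq V]

/-- Let `I_c` be a critical independent set and `I_M` a maximum
independent set of `G`. With `C = I_c ∩ I_M`, `A = I_c \ C`, `B = N(A) ∩ I_M`, we
have `|A| = |B|` and `(I_M \ B) ∪ A` is a maximum independent set of `G`. -/
theorem critical_max_exchange (G : SimpleGraph V) (Ic IM : Set V)
    (hIc : IsCriticalIndep G Ic) (hIM : IsMaxIndep G IM) :
    (Ic \ (Ic ∩ IM)).ncard = (nbhdSet G (Ic \ (Ic ∩ IM)) ∩ IM).ncard ∧
    IsMaxIndep G ((IM \ (nbhdSet G (Ic \ (Ic ∩ IM)) ∩ IM)) ∪ (Ic \ (Ic ∩ IM))) := by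
  set C := Ic ∩ IM with hCdef
  set A := Ic \ C with hAdef
  set B := nbhdSet G A ∩ IM with hBdef
  have hAIc : A ⊆ Ic := Set.diff_subset
  have hCIc : C ⊆ Ic := Set.inter_subset_left
  have hCIM : C ⊆ IM := Set.inter_subset_right
  have hBIM : B ⊆ IM := Set.inter_subset_right
  have hAIM : Disjoint A IM := by
    rw [Set.disjoint_left]
    rintro x ⟨hxI, hxn⟩ hxM
    exact hxn ⟨hxI, hxM⟩
  have hNmono : ∀ {s t : Set V}, s ⊆ t → nbhdSet G s ⊆ nbhdSet G t := by
    rintro s t hst v ⟨u, hu, huv⟩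
    exact ⟨u, hst hu, huv⟩
  have hCindep : IsIndep G C := fun u hu v hv => hIc.1 (hCIc hu) (hCIc hv)
  have hBsub : B ⊆ nbhdSet G Ic \ nbhdSet G C := by
    rintro v ⟨hvA, hvM⟩
    refine ⟨hNmono hAIc hvA, ?_⟩
    rintro ⟨u, hu, huv⟩
    exact hIM.1 (hCIM hu) hvM huv
  -- criticality gives |N(Ic)| - |N(C)| ≤ |A|
  have hcrit := hIc.2 C hCindep
  unfold diffSet at hcrit
  have hIcsplit : A.ncard + C.ncard = Ic.ncard :=
    Set.ncard_diff_add_ncard_of_subset hCIc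
  have hNsplit : (nbhdSet G Ic \ nbhdSet G C).ncard + (nbhdSet G C).ncard
      = (nbhdSet G Ic).ncard :=
    Set.ncard_diff_add_ncard_of_subset (hNmono hCIc)
  have hBle' : B.ncard ≤ (nbhdSet G Ic \ nbhdSet G C).ncard :=
    Set.ncard_le_ncard hBsub
  have hBA : B.ncard ≤ A.ncard := by omega
  -- the exchanged set
  have hJindep : IsIndep G ((IM \ B) ∪ A) := by
    rintro u hu v hv hadj
    rcases hu with hu | hu <;> rcases hv with hv | hv
    · exact hIM.1 hu.1 hv.1 hadj
    · exact hu.2 ⟨⟨v, hv, hadj.symm⟩, hu.1⟩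
    · exact hv.2 ⟨⟨u, hu, hadj⟩, hv.1⟩
    · exact hIc.1 (hAIc hu) (hAIc hv) hadj
  have hdisj : Disjoint (IM \ B) A := (hAIM.mono_right Set.diff_subset).symm
  have hJcard : ((IM \ B) ∪ A).ncard = (IM \ B).ncard + A.ncard :=
    Set.ncard_union_eq hdisj
  have hIMsplit : (IM \ B).ncard + B.ncard = IM.ncard :=
    Set.ncard_diff_add_ncard_of_subset hBIM
  have hJle : ((IM \ B) ∪ A).ncard ≤ IM.ncard := hIM.2 _ hJindep
  have hAB : A.ncard = B.ncard := by omega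
  have hJeq : ((IM \ B) ∪ A).ncard = IM.ncard := by omega
  exact ⟨hAB, hJindep, fun T hT => hJeq ▸ hIM.2 T hT⟩
end

section
/- Let G be a finite simple graph, let I_c be a critical independent set of G, and let I_M be a maximum independent set of G. Then C = I_c ∩ I_M is a critical independent set of G. -/
variable {V : Type*} [Fintype V] [DecidableEq V]

section Aux

variable {V : Type*} [Fintype V] [DecidableEq V]

private lemma key_ineq (G : SimpleGraph V) (A B : Set V)
    (hA : IsIndep G A) (hB : IsMaxIndep G B) :
    diffSet G A ≤ diffSet G (A ∩ B) := by
  classical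
  set C := A ∩ B with hCdef
  set D := A \ B with hDdef
  let t : D → Finset V := fun a => Finset.univ.filter (fun v => v ∈ B ∧ G.Adj a.1 v)
  have hmem_t : ∀ (a : D) (v : V), v ∈ t a ↔ v ∈ B ∧ G.Adj a.1 v := by
    intro a v
    simp [t]
  have hall : ∀ s : Finset D, s.card ≤ (s.biUnion t).card := by
    intro s
    set T := s.biUnion t with hT
    set S : Set V := ↑(s.image Subtype.val) with hS
    have hmem_S : ∀ v : V, v ∈ S ↔ ∃ a : D, a ∈ s ∧ a.1 = v := by
      intro v
      simp [hS]
    have hTB : (↑T : Set V) ⊆ B := by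
      intro v hv
      obtain ⟨a, _, hat⟩ := Finset.mem_biUnion.mp hv
      exact ((hmem_t a v).mp hat).1
    have hSD : S ⊆ D := by
      intro v hv
      obtain ⟨a, _, rfl⟩ := (hmem_S v).mp hv
      exact a.2
    have hindep : IsIndep G ((B \ ↑T) ∪ S) := by
      intro u hu v hv hadj
      have key : ∀ x y : V, x ∈ S → y ∈ B \ ↑T → ¬ G.Adj x y := by
        intro x y hx hy hxy
        obtain ⟨a, has, rfl⟩ := (hmem_S x).mp hx
        have : y ∈ T := Finset.mem_biUnion.mpr ⟨a, has, (hmem_t a y).mpr ⟨hy.1, hxy⟩⟩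
        exact hy.2 this
      rcases hu with hu | hu <;> rcases hv with hv | hv
      · exact hB.1 hu.1 hv.1 hadj
      · exact key v u hv hu hadj.symm
      · exact key u v hu hv hadj
      · exact hA ((hSD hu).1) ((hSD hv).1) hadj
    have hle := hB.2 _ hindep
    have hdisj : Disjoint (B \ ↑T) S := by
      rw [Set.disjoint_left]
      intro x hx hxS
      exact (hSD hxS).2 hx.1
    have h1 : ((B \ ↑T) ∪ S).ncard = (B \ ↑T).ncard + S.ncard :=
      Set.ncard_union_eq hdisj (Set.toFinite _) (Set.toFinite _)
    have h2 : (B \ ↑T).ncard + (↑T : Set V).ncard = B.ncard :=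
      Set.ncard_diff_add_ncard_of_subset hTB (Set.toFinite _)
    have h3 : S.ncard = s.card := by
      rw [hS, Set.ncard_coe_finset, Finset.card_image_of_injective _ Subtype.val_injective]
    have h4 : (↑T : Set V).ncard = T.card := Set.ncard_coe_finset _
    omega
  obtain ⟨f, hfinj, hft⟩ := (Finset.all_card_le_biUnion_card_iff_exists_injective t).mp hall
  have hCA : C ⊆ A := Set.inter_subset_left
  have hCB : C ⊆ B := Set.inter_subset_right
  let F : V → V := fun v => if h : v ∈ D then f ⟨v, h⟩ else v
  have hmaps : ∀ a ∈ D, F a ∈ nbhdSet G A \ nbhdSet G C := by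
    intro a ha
    have hfa := (hmem_t ⟨a, ha⟩ (f ⟨a, ha⟩)).mp (hft ⟨a, ha⟩)
    have hFa : F a = f ⟨a, ha⟩ := dif_pos ha
    rw [hFa]
    constructor
    · exact ⟨a, ha.1, hfa.2⟩
    · rintro ⟨c, hc, hadj⟩
      exact hB.1 (hCB hc) hfa.1 hadj
  have hinjOn : Set.InjOn F D := by
    intro u hu v hv huv
    simp only [F, dif_pos hu, dif_pos hv] at huv
    exact congrArg Subtype.val (hfinj huv)
  have hcard : D.ncard ≤ (nbhdSet G A \ nbhdSet G C).ncard :=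
    Set.ncard_le_ncard_of_injOn F hmaps hinjOn (Set.toFinite _)
  have hNCsub : nbhdSet G C ⊆ nbhdSet G A := by
    rintro v ⟨u, hu, hadj⟩
    exact ⟨u, hCA hu, hadj⟩
  have h5 : (nbhdSet G A \ nbhdSet G C).ncard + (nbhdSet G C).ncard = (nbhdSet G A).ncard :=
    Set.ncard_diff_add_ncard_of_subset hNCsub (Set.toFinite _)
  have h7 : A \ C = D := by
    ext x
    simp only [hCdef, hDdef, Set.mem_diff, Set.mem_inter_iff]
    tauto
  have h6 : D.ncard + C.ncard = A.ncard := by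
    rw [← h7]
    exact Set.ncard_diff_add_ncard_of_subset hCA (Set.toFinite _)
  simp only [diffSet]
  omega

end Aux

/-- Let `I_c` be a critical independent set and `I_M` a maximum
independent set of `G`. Then `I_c ∩ I_M` is a critical independent set of `G`. -/
theorem critical_inter_max_isCritical (G : SimpleGraph V) (Ic IM : Set V)
    (hIc : IsCriticalIndep G Ic) (hIM : IsMaxIndep G IM) :
    IsCriticalIndep G (Ic ∩ IM) := by
  refine ⟨fun u hu v hv => hIc.1 hu.1 hv.1, fun J hJ => ?_⟩
  exact (hIc.2 J hJ).trans (key_ineq G Ic IM hIc.1 hIM)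
end

section
/- Let G be a finite simple graph, let I_c be a critical independent set of G, and let I_M be a maximum independent set of G. Set C = I_c ∩ I_M, A = I_c \ C, and B = N(A) ∩ I_M. Then (I_M ∪ A) \ B is a maximum independent set of G containing I_c. -/
variable {V : Type*} [Fintype V] [DecidableEq V]

/-- Let `I_c` be a critical independent set and `I_M` a maximum
independent set of `G`. With `C = I_c ∩ I_M`, `A = I_c \ C`, `B = N(A) ∩ I_M`, the
set `(I_M ∪ A) \ B` is a maximum independent set of `G` containing `I_c`. -/
theorem max_containing_critical (G : SimpleGraph V) (Ic IM : Set V)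
    (hIc : IsCriticalIndep G Ic) (hIM : IsMaxIndep G IM) :
    IsMaxIndep G ((IM ∪ (Ic \ (Ic ∩ IM))) \ (nbhdSet G (Ic \ (Ic ∩ IM)) ∩ IM)) ∧
    Ic ⊆ (IM ∪ (Ic \ (Ic ∩ IM))) \ (nbhdSet G (Ic \ (Ic ∩ IM)) ∩ IM) := by

  classical
  set C : Set V := Ic ∩ IM with hC
  set A : Set V := Ic \ C with hA
  set B : Set V := nbhdSet G A ∩ IM with hB
  set S : Set V := (IM ∪ A) \ B with hS
  have hIndIc := hIc.1
  have hIndIM := hIM.1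
  have hAsubIc : A ⊆ Ic := Set.diff_subset
  have hAIM : Disjoint A IM := by
    rw [Set.disjoint_left]
    rintro x ⟨hxIc, hxC⟩ hxIM
    exact hxC ⟨hxIc, hxIM⟩
  have hBsubIM : B ⊆ IM := Set.inter_subset_right
  have hAB : Disjoint A B := hAIM.mono_right hBsubIM
  -- S is independent
  have hIndS : IsIndep G S := by
    rintro u ⟨hu, huB⟩ v ⟨hv, hvB⟩ hadj
    rcases hu with hu | hu <;> rcases hv with hv | hv
    · exact hIndIM hu hv hadj
    · exact huB ⟨⟨v, hv, hadj.symm⟩, hu⟩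
    · exact hvB ⟨⟨u, hu, hadj⟩, hv⟩
    · exact hIndIc (hAsubIc hu) (hAsubIc hv) hadj
  -- Ic ⊆ S
  have hIcS : Ic ⊆ S := by
    intro x hx
    by_cases hxIM : x ∈ IM
    · refine ⟨Or.inl hxIM, ?_⟩
      rintro ⟨⟨a, haA, hadj⟩, -⟩
      exact hIndIc (hAsubIc haA) hx hadj
    · refine ⟨Or.inr ⟨hx, fun h => hxIM h.2⟩, ?_⟩
      rintro ⟨-, hxIM'⟩
      exact hxIM hxIM'
  -- cardinality inequality |B| ≤ |A|
  have hCsubIc : C ⊆ Ic := Set.inter_subset_left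
  have hIndC : IsIndep G C := fun u hu v hv => hIndIc (hCsubIc hu) (hCsubIc hv)
  have hNmono : nbhdSet G C ⊆ nbhdSet G Ic := by
    rintro v ⟨u, hu, hadj⟩; exact ⟨u, hCsubIc hu, hadj⟩
  have hBsubdiff : B ⊆ nbhdSet G Ic \ nbhdSet G C := by
    rintro v ⟨⟨a, haA, hadj⟩, hvIM⟩
    refine ⟨⟨a, hAsubIc haA, hadj⟩, ?_⟩
    rintro ⟨c, hcC, hadj'⟩
    exact hIndIM hcC.2 hvIM hadj'
  have hcrit := hIc.2 C hIndC
  rw [diffSet, diffSet] at hcrit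
  have hIcCA : (Ic \ C).ncard = Ic.ncard - C.ncard := Set.ncard_diff hCsubIc
  have hCle : C.ncard ≤ Ic.ncard := Set.ncard_le_ncard hCsubIc (Set.toFinite _)
  have hNdiff : (nbhdSet G Ic \ nbhdSet G C).ncard
      = (nbhdSet G Ic).ncard - (nbhdSet G C).ncard := Set.ncard_diff hNmono
  have hNle : (nbhdSet G C).ncard ≤ (nbhdSet G Ic).ncard :=
    Set.ncard_le_ncard hNmono (Set.toFinite _)
  have hBle : B.ncard ≤ A.ncard := by
    have h1 : B.ncard ≤ (nbhdSet G Ic \ nbhdSet G C).ncard :=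
      Set.ncard_le_ncard hBsubdiff (Set.toFinite _)
    have h2 : ((nbhdSet G Ic \ nbhdSet G C).ncard : ℤ) ≤ (A.ncard : ℤ) := by
      have := hcrit
      rw [hA]
      omega
    omega
  -- |S| ≥ |IM|
  have hSsplit : S = (IM \ B) ∪ A := by
    rw [hS, Set.union_diff_distrib, hAB.sdiff_eq_left]
  have hScard : S.ncard = (IM \ B).ncard + A.ncard := by
    rw [hSsplit, Set.ncard_union_eq (hAIM.symm.mono_left Set.diff_subset)
      (Set.toFinite _) (Set.toFinite _)]
  have hIMB : (IM \ B).ncard = IM.ncard - B.ncard := Set.ncard_diff hBsubIM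
  have hBle' : B.ncard ≤ IM.ncard := Set.ncard_le_ncard hBsubIM (Set.toFinite _)
  have hSge : IM.ncard ≤ S.ncard := by omega
  exact ⟨⟨hIndS, fun T hT => le_trans (hIM.2 T hT) hSge⟩, hIcS⟩
end

section
/- For every finite simple graph G and every maximum independent set I_M of G, ker(G) ⊆ I_M; consequently ker(G) ⊆ core(G). -/
variable {V : Type*} [Fintype V] [DecidableEq V]

/-!
If `A` is a critical independent set and `S` a maximum independent set, put `X = A \ S`.
Swapping `S ∩ N(X)` for `X` in `S` keeps `S` independent, so maximality of `S` gives
`|X| ≤ |S ∩ N(X)|`. Since `S` is independent, `S ∩ N(X)` avoids `N(A ∩ S)`, so dropping `X`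
from `A` loses at least `|X|` neighbours: `d(A ∩ S) ≥ d(A)`. Thus `A ∩ S` is again critical,
and every vertex of `ker(G)` lies in it, hence in `S`.
-/

section

variable {V : Type*} {G : SimpleGraph V}

lemma nbhdSet_mono {s t : Set V} (h : s ⊆ t) : nbhdSet G s ⊆ nbhdSet G t := by
  rintro v ⟨u, hu, huv⟩
  exact ⟨u, h hu, huv⟩

lemma IsIndep.mono_s10 {s t : Set V} (ht : IsIndep G t) (h : s ⊆ t) : IsIndep G s :=
  fun _ hu _ hv => ht (h hu) (h hv)

lemma IsIndep.disjoint_nbhdSet {s t : Set V} (hs : IsIndep G s) (h : t ⊆ s) :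
    Disjoint s (nbhdSet G t) := by
  rw [Set.disjoint_left]
  rintro v hv ⟨u, hu, huv⟩
  exact hs (h hu) hv huv

lemma exists_isCriticalIndep [Finite V] (G : SimpleGraph V) : ∃ A, IsCriticalIndep G A := by
  obtain ⟨A, hA, hmax⟩ := Set.Finite.exists_maximalFor (diffSet G)
    {S : Set V | IsIndep G S} (Set.toFinite _) ⟨∅, fun _ hu => hu.elim⟩
  refine ⟨A, hA, fun J hJ => ?_⟩
  by_contra! h
  exact h.not_ge (hmax hJ h.le)

lemma IsMaxIndep.ncard_le_ncard_inter_nbhdSet [Finite V] {S X : Set V} (hS : IsMaxIndep G S)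
    (hX : IsIndep G X) (hXS : Disjoint X S) : X.ncard ≤ (S ∩ nbhdSet G X).ncard := by
  have hswap : IsIndep G ((S \ nbhdSet G X) ∪ X) := by
    rintro u (hu | hu) v (hv | hv) huv
    · exact hS.1 hu.1 hv.1 huv
    · exact hu.2 ⟨v, hv, huv.symm⟩
    · exact hv.2 ⟨u, hu, huv⟩
    · exact hX hu hv huv
  have hdisj : Disjoint (S \ nbhdSet G X) X :=
    (hXS.mono_right Set.sdiff_subset).symm
  have hle := hS.2 _ hswap
  rw [Set.ncard_union_eq hdisj,
    ← Set.ncard_inter_add_ncard_sdiff_eq_ncard S (nbhdSet G X)] at hle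
  omega

lemma IsMaxIndep.diffSet_le_diffSet_inter [Finite V] {A S : Set V} (hA : IsIndep G A)
    (hS : IsMaxIndep G S) : diffSet G A ≤ diffSet G (A ∩ S) := by
  have hN : nbhdSet G (A ∩ S) ⊆ nbhdSet G A := nbhdSet_mono Set.inter_subset_left
  have hlost : S ∩ nbhdSet G (A \ S) ⊆ nbhdSet G A \ nbhdSet G (A ∩ S) :=
    fun v ⟨hvS, hvN⟩ => ⟨nbhdSet_mono Set.sdiff_subset hvN,
      Set.disjoint_left.mp (hS.1.disjoint_nbhdSet Set.inter_subset_right) hvS⟩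
  have hX := hS.ncard_le_ncard_inter_nbhdSet (hA.mono_s10 Set.sdiff_subset) Set.disjoint_sdiff_left
  have hA_split := Set.ncard_inter_add_ncard_sdiff_eq_ncard A S
  have hN_split := Set.ncard_sdiff_add_ncard_of_subset hN
  have hlost_le := Set.ncard_le_ncard hlost
  unfold diffSet
  omega

lemma IsCriticalIndep.inter_of_isMaxIndep [Finite V] {A S : Set V} (hA : IsCriticalIndep G A)
    (hS : IsMaxIndep G S) : IsCriticalIndep G (A ∩ S) :=
  ⟨hA.1.mono_s10 Set.inter_subset_left,
    fun J hJ => (hA.2 J hJ).trans (hS.diffSet_le_diffSet_inter hA.1)⟩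

lemma kerSet_subset_of_isMaxIndep [Finite V] {S : Set V} (hS : IsMaxIndep G S) :
    kerSet G ⊆ S := by
  obtain ⟨A, hA⟩ := exists_isCriticalIndep G
  exact fun x hx => (Set.mem_sInter.mp hx _ (hA.inter_of_isMaxIndep hS)).2

end

/-- For every finite simple graph `G` and every maximum
independent set `I_M` of `G`, `ker(G) ⊆ I_M`; consequently `ker(G) ⊆ core(G)`. -/
theorem ker_subset_maxIndep_and_core (G : SimpleGraph V) :
    (∀ IM : Set V, IsMaxIndep G IM → kerSet G ⊆ IM) ∧ kerSet G ⊆ coreSet G :=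
  ⟨fun _ hIM => kerSet_subset_of_isMaxIndep hIM,
    Set.subset_sInter fun _ hS => kerSet_subset_of_isMaxIndep hS⟩
end

section
/- Let G be a finite simple graph, let I_c be a critical independent set of G, and let I_1^M, …, I_n^M be a family of maximum independent sets of G. Set C = I_c ∩ (⋃_{j=1}^n I_j^M), A = I_c \ C, and B = N(A) ∩ (⋂_{j=1}^n I_j^M). Then |A| = |B|. -/
variable {V : Type*} [Fintype V] [DecidableEq V]

private lemma crit_hall_aux (G : SimpleGraph V) {Ic : Set V} (hIc : IsCriticalIndep G Ic)
    {Y : Set V} (hY : Y ⊆ nbhdSet G Ic) :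
    Y.ncard ≤ (nbhdSet G Y ∩ Ic).ncard := by
  classical
  set K := nbhdSet G Y ∩ Ic with hK
  have hKsub : K ⊆ Ic := Set.inter_subset_right
  set J := Ic \ K with hJ
  have hJind : IsIndep G J := by
    intro u hu v hv
    exact hIc.1 hu.1 hv.1
  have hcrit := hIc.2 J hJind
  have hNJ : nbhdSet G J ⊆ nbhdSet G Ic \ Y := by
    rintro v ⟨u, hu, huv⟩
    exact ⟨⟨u, hu.1, huv⟩, fun hvY => hu.2 ⟨⟨v, hvY, huv.symm⟩, hu.1⟩⟩
  have hdisj : Disjoint (nbhdSet G J) Y := Set.disjoint_left.2 fun v hv => (hNJ hv).2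
  have h1 : (nbhdSet G J).ncard + Y.ncard ≤ (nbhdSet G Ic).ncard := by
    rw [← Set.ncard_union_eq hdisj (Set.toFinite _) (Set.toFinite _)]
    exact Set.ncard_le_ncard (Set.union_subset (fun v hv => (hNJ hv).1) hY) (Set.toFinite _)
  have h2 : J.ncard + K.ncard = Ic.ncard := by
    rw [hJ]
    exact Set.ncard_diff_add_ncard_of_subset hKsub (Set.toFinite _)
  unfold diffSet at hcrit
  omega

private lemma max_exchange_aux (G : SimpleGraph V) {Ic S : Set V} (hIcInd : IsIndep G Ic)
    (hS : IsMaxIndep G S) : (Ic \ S).ncard ≤ (nbhdSet G Ic ∩ S).ncard := by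
  classical
  set T := Ic ∪ (S \ nbhdSet G Ic) with hT
  have hTind : IsIndep G T := by
    rintro u (hu | hu) v (hv | hv) huv
    · exact hIcInd hu hv huv
    · exact hv.2 ⟨u, hu, huv⟩
    · exact hu.2 ⟨v, hv, huv.symm⟩
    · exact hS.1 hu.1 hv.1 huv
  have hTcard := hS.2 T hTind
  have hT2 : T = (Ic \ S) ∪ (S \ nbhdSet G Ic) := by
    apply Set.Subset.antisymm
    · rintro x (hx | hx)
      · by_cases h : x ∈ S
        · exact Or.inr ⟨h, fun hN => by obtain ⟨u, hu, hux⟩ := hN; exact hIcInd hu hx hux⟩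
        · exact Or.inl ⟨hx, h⟩
      · exact Or.inr hx
    · rintro x (hx | hx)
      · exact Or.inl hx.1
      · exact Or.inr hx
  have hd1 : Disjoint (Ic \ S) (S \ nbhdSet G Ic) :=
    Set.disjoint_left.2 fun x hx hx' => hx.2 hx'.1
  have h3 : (Ic \ S).ncard + (S \ nbhdSet G Ic).ncard = T.ncard := by
    rw [hT2, Set.ncard_union_eq hd1 (Set.toFinite _) (Set.toFinite _)]
  have h4 : (S \ (nbhdSet G Ic ∩ S)).ncard + (nbhdSet G Ic ∩ S).ncard = S.ncard :=
    Set.ncard_diff_add_ncard_of_subset Set.inter_subset_right (Set.toFinite _)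
  have h5 : S \ (nbhdSet G Ic ∩ S) = S \ nbhdSet G Ic := Set.diff_inter_self_eq_diff
  rw [h5] at h4
  omega


/-- Let `I_c` be a critical independent set of `G` and let
`I_1^M, …, I_n^M` be a family of maximum independent sets of `G`. Set
`C = I_c ∩ (⋃ j, I_j^M)`, `A = I_c \ C`, `B = N(A) ∩ (⋂ j, I_j^M)`.
Then `|A| = |B|`. -/
theorem critical_family_exchange_card (G : SimpleGraph V) (Ic : Set V)
    (hIc : IsCriticalIndep G Ic) (n : ℕ) (hn : 1 ≤ n) (I : Fin n → Set V)
    (hI : ∀ j, IsMaxIndep G (I j)) :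
    (Ic \ (Ic ∩ ⋃ j, I j)).ncard =
      (nbhdSet G (Ic \ (Ic ∩ ⋃ j, I j)) ∩ ⋂ j, I j).ncard := by
  classical
  set NI : Set V := nbhdSet G Ic with hNI
  -- Hall's condition from `N(Ic)` into `Ic`, via criticality
  let t : NI → Finset V := fun w => (Set.toFinite {v | v ∈ Ic ∧ G.Adj (w : V) v}).toFinset
  have hhall : ∀ s : Finset NI, s.card ≤ (s.biUnion t).card := by
    intro s
    set Y : Set V := (↑(s.image Subtype.val) : Set V) with hY
    have hYsub : Y ⊆ nbhdSet G Ic := by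
      intro v hv
      rw [hY, Finset.mem_coe, Finset.mem_image] at hv
      obtain ⟨w, _, rfl⟩ := hv
      exact w.2
    have h1 : Y.ncard = s.card := by
      rw [hY, Set.ncard_coe_finset, Finset.card_image_of_injective _ Subtype.val_injective]
    have h2 : nbhdSet G Y ∩ Ic ⊆ ↑(s.biUnion t) := by
      rintro v ⟨⟨u, hu, huv⟩, hvIc⟩
      rw [hY, Finset.mem_coe, Finset.mem_image] at hu
      obtain ⟨w, hws, rfl⟩ := hu
      rw [Finset.mem_coe, Finset.mem_biUnion]
      exact ⟨w, hws, by rw [Set.Finite.mem_toFinset]; exact ⟨hvIc, huv⟩⟩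
    calc s.card = Y.ncard := h1.symm
      _ ≤ (nbhdSet G Y ∩ Ic).ncard := crit_hall_aux G hIc hYsub
      _ ≤ ((s.biUnion t : Finset V) : Set V).ncard := Set.ncard_le_ncard h2 (Set.toFinite _)
      _ = (s.biUnion t).card := Set.ncard_coe_finset _
  obtain ⟨f, hfinj, hf⟩ := (Finset.all_card_le_biUnion_card_iff_exists_injective t).1 hhall
  have hf' : ∀ w : NI, f w ∈ Ic ∧ G.Adj (w : V) (f w) := by
    intro w
    have := hf w
    rwa [Set.Finite.mem_toFinset] at this
  set g : V → V := fun w => if h : w ∈ NI then f ⟨w, h⟩ else w with hgdef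
  have hg : ∀ w ∈ NI, g w ∈ Ic ∧ G.Adj w (g w) := by
    intro w hw
    simp only [hgdef, dif_pos hw]
    exact hf' ⟨w, hw⟩
  have hginj : Set.InjOn g NI := by
    intro a ha b hb hab
    simp only [hgdef, dif_pos ha, dif_pos hb] at hab
    exact congrArg Subtype.val (hfinj hab)
  -- for each `j`, `g` is a bijection from `N(Ic) ∩ I j` onto `Ic \ I j`
  have himg : ∀ j, g '' (NI ∩ I j) = Ic \ I j := by
    intro j
    have hsub : g '' (NI ∩ I j) ⊆ Ic \ I j := by
      rintro v ⟨w, ⟨hwN, hwI⟩, rfl⟩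
      obtain ⟨h1, h2⟩ := hg w hwN
      exact ⟨h1, fun hvI => (hI j).1 hwI hvI h2⟩
    have hcardle : (Ic \ I j).ncard ≤ (g '' (NI ∩ I j)).ncard := by
      rw [Set.ncard_image_of_injOn (hginj.mono Set.inter_subset_left)]
      exact max_exchange_aux G hIc.1 (hI j)
    exact (Set.eq_of_subset_of_ncard_le hsub hcardle (Set.toFinite _))
  set A : Set V := Ic \ ⋃ j, I j with hA
  have hAeq : Ic \ (Ic ∩ ⋃ j, I j) = A := Set.diff_self_inter
  set B0 : Set V := NI ∩ ⋂ j, I j with hB0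
  have hBeq : nbhdSet G A ∩ ⋂ j, I j = B0 := by
    ext w
    constructor
    · rintro ⟨⟨u, hu, huv⟩, hw2⟩
      exact ⟨⟨u, hu.1, huv⟩, hw2⟩
    · rintro ⟨⟨u, hu, huv⟩, hw2⟩
      refine ⟨⟨u, ⟨hu, fun hU => ?_⟩, huv⟩, hw2⟩
      obtain ⟨j, hj⟩ := Set.mem_iUnion.1 hU
      exact (hI j).1 hj (Set.mem_iInter.1 hw2 j) huv
  have hBA : B0.ncard ≤ A.ncard := by
    refine Set.ncard_le_ncard_of_injOn g ?_ (hginj.mono Set.inter_subset_left) (Set.toFinite _)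
    rintro w ⟨hwN, hwI⟩
    obtain ⟨h1, h2⟩ := hg w hwN
    refine ⟨h1, fun hU => ?_⟩
    obtain ⟨j, hj⟩ := Set.mem_iUnion.1 hU
    exact (hI j).1 (Set.mem_iInter.1 hwI j) hj h2
  have hex : ∀ a ∈ A, ∃ w, w ∈ B0 ∧ g w = a := by
    intro a ha
    have haj : ∀ j, a ∈ Ic \ I j := fun j => ⟨ha.1, fun h => ha.2 (Set.mem_iUnion.2 ⟨j, h⟩)⟩
    have h0 : a ∈ g '' (NI ∩ I ⟨0, hn⟩) := by rw [himg ⟨0, hn⟩]; exact haj ⟨0, hn⟩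
    obtain ⟨w, hw, hgw⟩ := h0
    refine ⟨w, ⟨hw.1, Set.mem_iInter.2 fun j => ?_⟩, hgw⟩
    have hj : a ∈ g '' (NI ∩ I j) := by rw [himg j]; exact haj j
    obtain ⟨w', hw', hgw'⟩ := hj
    have hww : w' = w := hginj hw'.1 hw.1 (hgw'.trans hgw.symm)
    exact hww ▸ hw'.2
  have hAB : A.ncard ≤ B0.ncard := by
    choose w hw hgw using hex
    refine Set.ncard_le_ncard_of_injOn (fun a => if h : a ∈ A then w a h else a) ?_ ?_
      (Set.toFinite _)
    · intro a ha
      simp only [dif_pos ha]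
      exact hw a ha
    · intro a ha b hb hab
      simp only [dif_pos ha, dif_pos hb] at hab
      have := congrArg g hab
      rwa [hgw a ha, hgw b hb] at this
  rw [hAeq, hBeq]
  exact le_antisymm hAB hBA
end

section
/- Let G be a finite simple graph, let I_c be a critical independent set of G, and let I_1^M, …, I_n^M be a family of maximum independent sets of G. Then I_c ∩ I_1^M ∩ ⋯ ∩ I_n^M is a critical independent set of G. -/
variable {V : Type*} [Fintype V] [DecidableEq V]

private lemma nbhd_mono (G : SimpleGraph V) {X Y : Set V} (h : X ⊆ Y) :
    nbhdSet G X ⊆ nbhdSet G Y := by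
  rintro v ⟨u, hu, huv⟩
  exact ⟨u, h hu, huv⟩

private lemma critical_inter_max (G : SimpleGraph V) {A B : Set V}
    (hA : IsCriticalIndep G A) (hB : IsMaxIndep G B) :
    IsCriticalIndep G (A ∩ B) := by
  obtain ⟨hAi, hAc⟩ := hA
  obtain ⟨hBi, hBm⟩ := hB
  set W := A \ B with hWdef
  set X := A ∩ B with hXdef
  -- J = W ∪ (B \ N(W)) is independent
  have hJi : IsIndep G (W ∪ (B \ nbhdSet G W)) := by
    rintro u (hu | hu) v (hv | hv) hadj
    · exact hAi hu.1 hv.1 hadj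
    · exact hv.2 ⟨u, hu, hadj⟩
    · exact hu.2 ⟨v, hv, hadj.symm⟩
    · exact hBi hu.1 hv.1 hadj
  -- |W| ≤ |B ∩ N(W)|
  have hdisj : Disjoint W (B \ nbhdSet G W) := by
    rw [Set.disjoint_left]
    rintro x hx ⟨hxB, -⟩
    exact hx.2 hxB
  have hcard : (W ∪ (B \ nbhdSet G W)).ncard = W.ncard + (B \ nbhdSet G W).ncard :=
    Set.ncard_union_eq hdisj (Set.toFinite _) (Set.toFinite _)
  have hsplitB : (B \ nbhdSet G W).ncard + (B ∩ nbhdSet G W).ncard = B.ncard := by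
    rw [add_comm]
    exact Set.ncard_inter_add_ncard_diff_eq_ncard B (nbhdSet G W) (Set.toFinite _)
  have hle : (W ∪ (B \ nbhdSet G W)).ncard ≤ B.ncard := hBm _ hJi
  have hWle : W.ncard ≤ (B ∩ nbhdSet G W).ncard := by omega
  -- B ∩ N(X) = ∅
  have hBNX : ∀ v ∈ B, v ∉ nbhdSet G X := by
    rintro v hv ⟨u, hu, huv⟩
    exact hBi hu.2 hv huv
  -- N(X) and B ∩ N(W) are disjoint subsets of N(A)
  have hsub : nbhdSet G X ∪ (B ∩ nbhdSet G W) ⊆ nbhdSet G A := by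
    rintro v (hv | hv)
    · exact nbhd_mono G Set.inter_subset_left hv
    · exact nbhd_mono G Set.diff_subset hv.2
  have hdisj2 : Disjoint (nbhdSet G X) (B ∩ nbhdSet G W) := by
    rw [Set.disjoint_left]
    intro x hx hx2
    exact hBNX x hx2.1 hx
  have hNA : (nbhdSet G X).ncard + (B ∩ nbhdSet G W).ncard ≤ (nbhdSet G A).ncard := by
    rw [← Set.ncard_union_eq hdisj2 (Set.toFinite _) (Set.toFinite _)]
    exact Set.ncard_le_ncard hsub (Set.toFinite _)
  -- |A| = |X| + |W|
  have hsplitA : X.ncard + W.ncard = A.ncard :=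
    Set.ncard_inter_add_ncard_diff_eq_ncard A B (Set.toFinite _)
  -- conclude d(X) ≥ d(A)
  have hd : diffSet G A ≤ diffSet G X := by
    unfold diffSet
    have h1 : (W.ncard : ℤ) ≤ (B ∩ nbhdSet G W).ncard := by exact_mod_cast hWle
    have h2 : ((nbhdSet G X).ncard : ℤ) + (B ∩ nbhdSet G W).ncard ≤ (nbhdSet G A).ncard := by
      exact_mod_cast hNA
    have h3 : (X.ncard : ℤ) + W.ncard = A.ncard := by exact_mod_cast hsplitA
    omega
  refine ⟨fun u hu v hv hadj => hAi hu.1 hv.1 hadj, fun J hJ => ?_⟩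
  exact le_trans (hAc J hJ) hd

private lemma critical_inter_iInter (G : SimpleGraph V) :
    ∀ (n : ℕ) (A : Set V), IsCriticalIndep G A → ∀ (I : Fin n → Set V),
      (∀ j, IsMaxIndep G (I j)) → IsCriticalIndep G (A ∩ ⋂ j, I j)
  | 0, A, hA, I, hI => by
      simpa using hA
  | (n+1), A, hA, I, hI => by
      have h0 := critical_inter_max G hA (hI 0)
      have hrec := critical_inter_iInter G n (A ∩ I 0) h0
        (fun j => I j.succ) (fun j => hI j.succ)
      have heq : (A ∩ I 0) ∩ ⋂ j : Fin n, I j.succ = A ∩ ⋂ j : Fin (n+1), I j := by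
        ext x
        simp only [Set.mem_inter_iff, Set.mem_iInter, Fin.forall_fin_succ]
        tauto
      rwa [heq] at hrec

/-- Let `I_c` be a critical independent set of `G` and let
`I_1^M, …, I_n^M` be a family of maximum independent sets of `G`. Then
`I_c ∩ I_1^M ∩ ⋯ ∩ I_n^M` is a critical independent set of `G`. -/
theorem critical_inter_family_isCritical (G : SimpleGraph V) (Ic : Set V)
    (hIc : IsCriticalIndep G Ic) (n : ℕ) (hn : 1 ≤ n) (I : Fin n → Set V)
    (hI : ∀ j, IsMaxIndep G (I j)) :
    IsCriticalIndep G (Ic ∩ ⋂ j, I j) :=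
  critical_inter_iInter G n Ic hIc I hI
end
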